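/- Let μ be a Borel probability measure on a Polish metric space (X,d) that satisfies a T₁(c) transportation-cost inequality for some c > 0. Then: (i) for any two Borel sets A, B ⊆ X with μ(A), μ(B) > 0, d(A,B) ≤ sqrt(2c ln(1/μ(A))) + sqrt(2c ln(1/μ(B))), where d(A,B) = inf{d(x,y) : x ∈ A, y ∈ B}; and (ii) consequently, μ has the Gaussian concentration property: for every Borel set A with μ(A) ≥ 1/2 and every r ≥ sqrt(2c ln 2), μ(A_r) ≥ 1 − exp(−(r − sqrt(2c ln 2))² / (2c)). (Marton's argument: from transportation to concentration.) -/

import Mathlib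

open MeasureTheory ProbabilityTheory
open scoped ENNReal NNReal Classical

/-- The relative entropy (Kullback–Leibler divergence) `D(Q‖P)`, equal to
`∫ ln(dQ/dP) dQ` when `Q ≪ P` (and the log-likelihood ratio is integrable), and `+∞`
otherwise. -/
noncomputable def relEnt {α : Type*} [MeasurableSpace α] (Q P : Measure α) : ℝ≥0∞ :=
  if Q ≪ P ∧ Integrable (fun x => Real.log (Q.rnDeriv P x).toReal) Q
  then ENNReal.ofReal (∫ x, Real.log (Q.rnDeriv P x).toReal ∂Q) else ⊤

/-- The `Lᵖ` Wasserstein distance associated with a cost (distance) function `d`: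
`W_p(μ,ν) = (inf over couplings π of μ and ν of ∫ d(x,y)^p dπ)^{1/p}`. -/
noncomputable def wassersteinDist {Y : Type*} [MeasurableSpace Y]
    (d : Y → Y → ℝ) (p : ℝ) (μ ν : Measure Y) : ℝ≥0∞ :=
  (⨅ π ∈ {π : Measure (Y × Y) | π.map Prod.fst = μ ∧ π.map Prod.snd = ν},
      ∫⁻ q, ENNReal.ofReal (d q.1 q.2 ^ p) ∂π) ^ p⁻¹

/-- A measure `μ` satisfies the transportation-cost inequality `T_p(c)` with respect to the
distance `d` if `W_p(μ,ν) ≤ √(2c·D(ν‖μ))` for every probability measure `ν ≪ μ`. -/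
def SatisfiesTC {Y : Type*} [MeasurableSpace Y] (d : Y → Y → ℝ) (p c : ℝ)
    (μ : Measure Y) : Prop :=
  ∀ ν : Measure Y, IsProbabilityMeasure ν → ν ≪ μ →
    wassersteinDist d p μ ν ≤ (ENNReal.ofReal (2 * c) * relEnt ν μ) ^ ((1:ℝ)/2)

/-!
Marton's argument. Conditioning `μ` on a set `A` of positive measure gives a measure at relative
entropy `ln(1/μ(A))` from `μ`, so `T₁(c)` bounds `W₁(μ, μ[|A])` by `√(2c ln(1/μ(A)))`. Any coupling
of `μ` with `μ[|A]` moves `x` into `A`, hence `W₁(μ, μ[|A]) ≥ ∫ d(x,A) dμ`. Since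
`d(A,B) ≤ d(x,A) + d(x,B)` for every `x`, integrating against `μ` gives (i). For (ii), apply (i) to
`A` and `B = {x | d(x,A) ≥ r}`, which lie at distance at least `r`, and solve for `μ(B)`.
-/

open Metric

lemma Real.le_exp_neg_sq_div_of_sq_le {p c t : ℝ} (hp : 0 < p) (hc : 0 < c)
    (hsq : t ^ 2 ≤ 2 * c * Real.log (1 / p)) : p ≤ Real.exp (-t ^ 2 / (2 * c)) := by
  have hlog : t ^ 2 / (2 * c) ≤ Real.log (1 / p) := by
    rw [div_le_iff₀ (by positivity)]
    linarith
  calc p = Real.exp (-Real.log (1 / p)) := by rw [one_div, Real.log_inv, neg_neg, Real.exp_log hp]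
    _ ≤ Real.exp (-t ^ 2 / (2 * c)) := by rw [Real.exp_le_exp, neg_div]; linarith

lemma MeasureTheory.log_one_div_measure_toReal_nonneg {α : Type*} [MeasurableSpace α]
    (μ : Measure α) [IsProbabilityMeasure μ] (A : Set α) :
    0 ≤ Real.log (1 / (μ A).toReal) := by
  rw [one_div, Real.log_inv, neg_nonneg]
  exact Real.log_nonpos ENNReal.toReal_nonneg measureReal_le_one

lemma relEnt_cond {α : Type*} [MeasurableSpace α] (μ : Measure α) [IsFiniteMeasure μ]
    {A : Set α} (hA : MeasurableSet A) (hA0 : μ A ≠ 0) :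
    relEnt μ[|A] μ = ENNReal.ofReal (Real.log (1 / (μ A).toReal)) := by
  have hac : μ[|A] ≪ μ := cond_absolutelyContinuous
  have hrn : (μ[|A]).rnDeriv μ =ᵐ[μ] A.indicator fun _ => (μ A)⁻¹ := by
    have hdens : μ[|A] = μ.withDensity (A.indicator fun _ => (μ A)⁻¹) := by
      rw [withDensity_indicator hA, withDensity_const]; rfl
    rw [hdens]
    exact Measure.rnDeriv_withDensity μ (measurable_const.indicator hA)
  have hlog : (fun x => Real.log ((μ[|A]).rnDeriv μ x).toReal) =ᵐ[μ[|A]]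
      fun _ => Real.log (1 / (μ A).toReal) := by
    filter_upwards [hac.ae_eq hrn, ae_cond_mem hA] with x hx hxA
    simp [hx, Set.indicator_of_mem hxA, ENNReal.toReal_inv]
  have : IsProbabilityMeasure μ[|A] := cond_isProbabilityMeasure hA0
  rw [relEnt, if_pos ⟨hac, (integrable_const _).congr hlog.symm⟩, integral_congr_ae hlog]
  simp

lemma SatisfiesTC.wassersteinDist_cond_le {α : Type*} [MeasurableSpace α] {d : α → α → ℝ}
    {c : ℝ} (hc : 0 ≤ c) {μ : Measure α} [IsProbabilityMeasure μ] (hT1 : SatisfiesTC d 1 c μ)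
    {A : Set α} (hA : MeasurableSet A) (hA0 : μ A ≠ 0) :
    wassersteinDist d 1 μ μ[|A] ≤ ENNReal.ofReal √(2 * c * Real.log (1 / (μ A).toReal)) := by
  have hL := log_one_div_measure_toReal_nonneg μ A
  calc wassersteinDist d 1 μ μ[|A]
      ≤ (ENNReal.ofReal (2 * c) * relEnt μ[|A] μ) ^ ((1 : ℝ) / 2) :=
        hT1 _ (cond_isProbabilityMeasure hA0) cond_absolutelyContinuous
    _ = ENNReal.ofReal √(2 * c * Real.log (1 / (μ A).toReal)) := by
        rw [relEnt_cond μ hA hA0, ← ENNReal.ofReal_mul (by positivity),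
          ENNReal.ofReal_rpow_of_nonneg (by positivity) (by norm_num), Real.sqrt_eq_rpow]

section MetricSpace

variable {X : Type*} [MetricSpace X]

lemma sInf_image2_dist_le_infDist_add_infDist {A B : Set X} (hA : A.Nonempty) (hB : B.Nonempty)
    (x : X) : sInf (Set.image2 dist A B) ≤ infDist x A + infDist x B := by
  have hbdd : BddBelow (Set.image2 dist A B) := ⟨0, by
    rintro _ ⟨a, -, b, -, rfl⟩
    exact dist_nonneg⟩
  refine le_of_forall_pos_le_add fun ε hε => ?_
  obtain ⟨a, haA, ha⟩ := (infDist_lt_iff hA).1 (lt_add_of_pos_right (infDist x A) (half_pos hε))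
  obtain ⟨b, hbB, hb⟩ := (infDist_lt_iff hB).1 (lt_add_of_pos_right (infDist x B) (half_pos hε))
  calc sInf (Set.image2 dist A B) ≤ dist a b := csInf_le hbdd (Set.mem_image2_of_mem haA hbB)
    _ ≤ dist x a + dist x b := dist_triangle_left a b x
    _ ≤ infDist x A + infDist x B + ε := by linarith

lemma le_sInf_image2_dist {A B : Set X} (hA : A.Nonempty) (hB : B.Nonempty) {r : ℝ}
    (h : ∀ y ∈ B, r ≤ infDist y A) : r ≤ sInf (Set.image2 dist A B) := by
  refine le_csInf (hA.image2 hB) ?_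
  rintro _ ⟨x, hx, y, hy, rfl⟩
  calc r ≤ infDist y A := h y hy
    _ ≤ dist y x := infDist_le_dist_of_mem hx
    _ = dist x y := dist_comm y x

variable [MeasurableSpace X] [BorelSpace X]

lemma lintegral_infDist_le_wassersteinDist {μ ν : Measure X} {A : Set X} (hν : ∀ᵐ y ∂ν, y ∈ A) :
    ∫⁻ x, ENNReal.ofReal (infDist x A) ∂μ ≤ wassersteinDist dist 1 μ ν := by
  rw [wassersteinDist, inv_one, ENNReal.rpow_one]
  refine le_iInf₂ fun π ⟨hπμ, hπν⟩ => ?_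
  have hsnd : ∀ᵐ q ∂π, q.2 ∈ A := by
    rw [← hπν] at hν
    exact ae_of_ae_map measurable_snd.aemeasurable hν
  rw [← hπμ, lintegral_map (continuous_infDist_pt A).measurable.ennreal_ofReal measurable_fst]
  refine lintegral_mono_ae ?_
  filter_upwards [hsnd] with q hq
  rw [Real.rpow_one]
  exact ENNReal.ofReal_le_ofReal (infDist_le_dist_of_mem hq)

variable {μ : Measure X} [IsProbabilityMeasure μ] {c : ℝ}

lemma SatisfiesTC.lintegral_infDist_le (hc : 0 ≤ c) (hT1 : SatisfiesTC dist 1 c μ) {A : Set X}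
    (hA : MeasurableSet A) (hA0 : μ A ≠ 0) :
    ∫⁻ x, ENNReal.ofReal (infDist x A) ∂μ
      ≤ ENNReal.ofReal √(2 * c * Real.log (1 / (μ A).toReal)) :=
  (lintegral_infDist_le_wassersteinDist (ae_cond_mem hA)).trans
    (hT1.wassersteinDist_cond_le hc hA hA0)

lemma SatisfiesTC.sInf_image2_dist_le (hc : 0 ≤ c) (hT1 : SatisfiesTC dist 1 c μ) {A B : Set X}
    (hA : MeasurableSet A) (hB : MeasurableSet B) (hA0 : μ A ≠ 0) (hB0 : μ B ≠ 0) :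
    sInf (Set.image2 dist A B) ≤
      √(2 * c * Real.log (1 / (μ A).toReal)) + √(2 * c * Real.log (1 / (μ B).toReal)) := by
  have key : ENNReal.ofReal (sInf (Set.image2 dist A B)) ≤
      ENNReal.ofReal √(2 * c * Real.log (1 / (μ A).toReal)) +
        ENNReal.ofReal √(2 * c * Real.log (1 / (μ B).toReal)) :=
    calc ENNReal.ofReal (sInf (Set.image2 dist A B))
        = ∫⁻ _, ENNReal.ofReal (sInf (Set.image2 dist A B)) ∂μ := by simp
      _ ≤ ∫⁻ x, ENNReal.ofReal (infDist x A) + ENNReal.ofReal (infDist x B) ∂μ := by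
          refine lintegral_mono fun x => ?_
          rw [← ENNReal.ofReal_add infDist_nonneg infDist_nonneg]
          exact ENNReal.ofReal_le_ofReal <| sInf_image2_dist_le_infDist_add_infDist
            (nonempty_of_measure_ne_zero hA0) (nonempty_of_measure_ne_zero hB0) x
      _ = ∫⁻ x, ENNReal.ofReal (infDist x A) ∂μ + ∫⁻ x, ENNReal.ofReal (infDist x B) ∂μ :=
          lintegral_add_left (continuous_infDist_pt A).measurable.ennreal_ofReal _
      _ ≤ _ := add_le_add (hT1.lintegral_infDist_le hc hA hA0) (hT1.lintegral_infDist_le hc hB hB0)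
  rwa [← ENNReal.ofReal_add (Real.sqrt_nonneg _) (Real.sqrt_nonneg _),
    ENNReal.ofReal_le_ofReal_iff (by positivity)] at key

lemma SatisfiesTC.measure_infDist_ge_le (hc : 0 < c) (hT1 : SatisfiesTC dist 1 c μ) {A : Set X}
    (hA : MeasurableSet A) (hA0 : μ A ≠ 0) {r : ℝ}
    (hr : √(2 * c * Real.log (1 / (μ A).toReal)) ≤ r) :
    μ {x | r ≤ infDist x A} ≤
      ENNReal.ofReal (Real.exp (-(r - √(2 * c * Real.log (1 / (μ A).toReal))) ^ 2 / (2 * c))) := by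
  set B := {x | r ≤ infDist x A}
  have hB : MeasurableSet B := measurableSet_le measurable_const (continuous_infDist_pt A).measurable
  rcases eq_or_ne (μ B) 0 with hB0 | hB0
  · simp [hB0]
  have hAB : r ≤ sInf (Set.image2 dist A B) :=
    le_sInf_image2_dist (nonempty_of_measure_ne_zero hA0) (nonempty_of_measure_ne_zero hB0)
      fun _ hy => hy
  have hdist := hT1.sInf_image2_dist_le hc.le hA hB hA0 hB0
  rw [← ENNReal.ofReal_toReal (measure_ne_top μ B)]
  refine ENNReal.ofReal_le_ofReal <| Real.le_exp_neg_sq_div_of_sq_le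
    (ENNReal.toReal_pos hB0 (measure_ne_top μ B)) hc ?_
  refine (Real.le_sqrt (by linarith) ?_).1 (by linarith)
  exact mul_nonneg (by positivity) (log_one_div_measure_toReal_nonneg μ B)

lemma SatisfiesTC.one_sub_exp_le_measure_infDist_lt (hc : 0 < c) (hT1 : SatisfiesTC dist 1 c μ)
    {A : Set X} (hA : MeasurableSet A) (hA_half : 1 / 2 ≤ μ A) {r : ℝ}
    (hr : √(2 * c * Real.log 2) ≤ r) :
    1 - ENNReal.ofReal (Real.exp (-(r - √(2 * c * Real.log 2)) ^ 2 / (2 * c))) ≤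
      μ {x | infDist x A < r} := by
  have hA0 : μ A ≠ 0 := (lt_of_lt_of_le (by norm_num) hA_half).ne'
  have hsA : √(2 * c * Real.log (1 / (μ A).toReal)) ≤ √(2 * c * Real.log 2) := by
    have hA_half' : 1 / 2 ≤ (μ A).toReal := by
      simpa using ENNReal.toReal_mono (measure_ne_top μ A) hA_half
    gcongr
    rw [div_le_iff₀ (by positivity)]
    linarith
  have hS : MeasurableSet {x | infDist x A < r} :=
    measurableSet_lt (continuous_infDist_pt A).measurable measurable_const
  have hSc : {x | infDist x A < r}ᶜ = {x | r ≤ infDist x A} := by ext; simp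
  rw [← compl_compl {x | infDist x A < r}, prob_compl_eq_one_sub hS.compl, hSc]
  gcongr
  calc μ {x | r ≤ infDist x A}
      ≤ ENNReal.ofReal (Real.exp (-(r - √(2 * c * Real.log (1 / (μ A).toReal))) ^ 2 / (2 * c))) :=
        hT1.measure_infDist_ge_le hc hA hA0 (hsA.trans hr)
    _ ≤ _ := by gcongr

end MetricSpace

theorem marton_transportation_to_concentration_general {X : Type*} [MetricSpace X]
    [MeasurableSpace X] [BorelSpace X]
    (μ : Measure X) [IsProbabilityMeasure μ] {c : ℝ} (hc : 0 < c)
    (hT1 : SatisfiesTC dist 1 c μ) :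
    (∀ A B : Set X, MeasurableSet A → MeasurableSet B → 0 < μ A → 0 < μ B →
      sInf (Set.image2 dist A B) ≤
        Real.sqrt (2 * c * Real.log (1 / (μ A).toReal)) +
          Real.sqrt (2 * c * Real.log (1 / (μ B).toReal))) ∧
    (∀ A : Set X, MeasurableSet A → 1/2 ≤ μ A →
      ∀ r : ℝ, Real.sqrt (2 * c * Real.log 2) ≤ r →
        1 - ENNReal.ofReal
            (Real.exp (-(r - Real.sqrt (2 * c * Real.log 2))^2 / (2 * c))) ≤
          μ {x | Metric.infDist x A < r}) :=
  ⟨fun _ _ hA hB hA0 hB0 => hT1.sInf_image2_dist_le hc.le hA hB hA0.ne' hB0.ne',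
    fun _ hA hA_half _ hr => hT1.one_sub_exp_le_measure_infDist_lt hc hA hA_half hr⟩

/-- **Marton's argument: from transportation to concentration.** If `μ` satisfies `T₁(c)`,
then (i) for any two Borel sets `A`, `B` of positive measure,
`d(A,B) ≤ √(2c ln(1/μ(A))) + √(2c ln(1/μ(B)))`, and (ii) `μ` has Gaussian concentration:
for every Borel `A` with `μ(A) ≥ 1/2` and every `r ≥ √(2c ln 2)`,
`μ(A_r) ≥ 1 - exp(-(r - √(2c ln 2))²/(2c))`. -/
theorem marton_transportation_to_concentration {X : Type*} [MetricSpace X]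
    [SecondCountableTopology X] [CompleteSpace X] [MeasurableSpace X] [BorelSpace X]
    (μ : Measure X) [IsProbabilityMeasure μ] {c : ℝ} (hc : 0 < c)
    (hT1 : SatisfiesTC dist 1 c μ) :
    (∀ A B : Set X, MeasurableSet A → MeasurableSet B → 0 < μ A → 0 < μ B →
      sInf (Set.image2 dist A B) ≤
        Real.sqrt (2 * c * Real.log (1 / (μ A).toReal)) +
          Real.sqrt (2 * c * Real.log (1 / (μ B).toReal))) ∧
    (∀ A : Set X, MeasurableSet A → 1/2 ≤ μ A →
      ∀ r : ℝ, Real.sqrt (2 * c * Real.log 2) ≤ r →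
        1 - ENNReal.ofReal
            (Real.exp (-(r - Real.sqrt (2 * c * Real.log 2))^2 / (2 * c))) ≤
          μ {x | Metric.infDist x A < r}) :=
  marton_transportation_to_concentration_general μ hc hT1
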